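/- arXiv:2007.13057 — 4 statements merged into one kernel-verified Lean document; each statement's English description precedes it below -/
import Mathlib

section
/- Every quaternion matrix has a unique Moore–Penrose inverse: for every matrix A over the quaternion algebra ℍ (with arbitrary finite index types m × n) there exists a unique matrix X (of index type n × m) satisfying the four Penrose equations A X A = A, X A X = X, (A X)* = A X and (X A)* = X A, where * denotes the conjugate transpose. -/
/-!
Penrose's argument. Quaternion matrices form a finite-dimensional `ℝ`-algebra, so `B = Aᴴ * A` is
algebraic over `ℝ`. Because `Mᴴ * M = 0` forces `M = 0`, `B ^ 2 * Y = 0` forces `B * Y = 0`, so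
`B` has no nilpotent part and a polynomial relation `B ^ k * q(B) = 0` with `q(0) ≠ 0` collapses
to `B * q(B) = 0`, which rearranges into `B = B ^ 2 * p(B)`. The matrix `p(B)` is Hermitian and
commutes with `B`, and `X = p(B) * Aᴴ` satisfies the Penrose equations. Uniqueness follows
formally from the four equations.
-/

open Matrix

/-- The four Penrose equations over the quaternions: `X` is a Moore–Penrose
inverse of `A`. -/
def IsMP {m n : Type*} [Fintype m] [Fintype n]
    (A : Matrix m n (Quaternion ℝ)) (X : Matrix n m (Quaternion ℝ)) : Prop :=
  A * X * A = A ∧ X * A * X = X ∧ (A * X)ᴴ = A * X ∧ (X * A)ᴴ = X * A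

open Polynomial

local notation "ℍ" => Quaternion ℝ

instance : StarModule ℝ ℍ :=
  ⟨fun r x => by rw [star_trivial r]; exact Quaternion.star_smul r x⟩

theorem IsSelfAdjoint.aeval {R A : Type*} [CommSemiring R] [StarRing R] [TrivialStar R]
    [Semiring A] [StarRing A] [Algebra R A] [StarModule R A] {a : A} (ha : IsSelfAdjoint a)
    (p : R[X]) : IsSelfAdjoint (aeval a p) := by
  induction p using Polynomial.induction_on' with
  | add p q hp hq => simpa using hp.add hq
  | monomial n r =>
    simpa [aeval_monomial, ← Algebra.smul_def] using (IsSelfAdjoint.all r).smul (ha.pow n)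

theorem mul_eq_zero_of_pow_succ_mul_eq_zero {S : Type*} [MonoidWithZero S] {b : S}
    (hb : ∀ y, b ^ 2 * y = 0 → b * y = 0) {y : S} :
    ∀ k : ℕ, b ^ (k + 1) * y = 0 → b * y = 0
  | 0, h => by simpa using h
  | k + 1, h => mul_eq_zero_of_pow_succ_mul_eq_zero hb k <| by
      rw [pow_succ', mul_assoc]
      exact hb _ (by rwa [← mul_assoc, ← pow_add, add_comm])

theorem exists_sq_mul_aeval_eq_self {K S : Type*} [Field K] [Ring S] [Algebra K S] {b : S}
    (halg : IsAlgebraic K b) (hb : ∀ y, b ^ 2 * y = 0 → b * y = 0) :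
    ∃ p : K[X], b ^ 2 * aeval b p = b := by
  obtain ⟨f, hf0, hfb⟩ := halg
  obtain ⟨q, hfq, hq⟩ := f.exists_eq_pow_rootMultiplicity_mul_and_not_dvd hf0 0
  rw [map_zero, sub_zero, X_dvd_iff] at hq
  rw [hfq, map_zero, sub_zero, map_mul, map_pow, aeval_X] at hfb
  have hbq : b * aeval b q = 0 :=
    mul_eq_zero_of_pow_succ_mul_eq_zero hb _ <| by rw [pow_succ', mul_assoc, hfb, mul_zero]
  rw [← X_mul_divX_add q, map_add, map_mul, aeval_X, aeval_C, mul_add, ← mul_assoc, ← sq,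
    ← Algebra.commutes, ← Algebra.smul_def, add_eq_zero_iff_eq_neg] at hbq
  refine ⟨-C (q.coeff 0)⁻¹ * q.divX, ?_⟩
  rw [map_mul, map_neg, aeval_C, neg_mul, ← Algebra.smul_def, mul_neg, mul_smul_comm, hbq,
    smul_neg, neg_neg, inv_smul_smul₀ hq]

namespace Matrix

-- `ℍ` is not a `StarOrderedRing`, so `Matrix.conjTranspose_mul_self_eq_zero` does not apply.
theorem eq_zero_of_conjTranspose_mul_self_eq_zero {m n : Type*} [Fintype m] {M : Matrix m n ℍ}
    (h : Mᴴ * M = 0) : M = 0 := by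
  refine Matrix.ext fun i j => ?_
  have hsum : ∑ k, Quaternion.normSq (M k j) = 0 := by
    apply Quaternion.algebraMap_injective
    simpa [mul_apply, Quaternion.star_mul_self, Quaternion.algebraMap_def] using congrFun₂ h j j
  rw [Finset.sum_eq_zero_iff_of_nonneg fun k _ => Quaternion.normSq_nonneg] at hsum
  exact Quaternion.normSq_eq_zero.mp (hsum i (Finset.mem_univ i))

theorem mul_eq_zero_of_conjTranspose_mul_self_mul_eq_zero {l m n : Type*} [Fintype m]
    [Fintype n] {A : Matrix m n ℍ} {Y : Matrix n l ℍ} (h : Aᴴ * A * Y = 0) : A * Y = 0 :=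
  eq_zero_of_conjTranspose_mul_self_eq_zero <|
    calc (A * Y)ᴴ * (A * Y) = Yᴴ * (Aᴴ * A * Y) := by
          simp only [conjTranspose_mul, Matrix.mul_assoc]
      _ = 0 := by rw [h, Matrix.mul_zero]

end Matrix

section MoorePenrose

variable {m n : Type*} [Fintype m] [Fintype n]

theorem isMP_mul_conjTranspose [DecidableEq n] {A : Matrix m n ℍ} {C : Matrix n n ℍ}
    (hC : C.IsHermitian) (hCB : Commute C (Aᴴ * A)) (hBC : (Aᴴ * A) ^ 2 * C = Aᴴ * A) :
    IsMP A (C * Aᴴ) := by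
  have hA : A * (C * (Aᴴ * A)) = A := by
    have h : A * (C * (Aᴴ * A) - 1) = 0 := by
      refine mul_eq_zero_of_conjTranspose_mul_self_mul_eq_zero ?_
      rw [Matrix.mul_sub, Matrix.mul_one, hCB.eq, ← Matrix.mul_assoc, ← sq, hBC, sub_self]
    rwa [Matrix.mul_sub, Matrix.mul_one, sub_eq_zero] at h
  have hAXA : A * (C * Aᴴ) * A = A := by simpa only [Matrix.mul_assoc] using hA
  have hAX : (A * (C * Aᴴ))ᴴ = A * (C * Aᴴ) := by
    rw [conjTranspose_mul, conjTranspose_mul, hC.eq, conjTranspose_conjTranspose,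
      Matrix.mul_assoc]
  refine ⟨hAXA, ?_, hAX, ?_⟩
  · calc C * Aᴴ * A * (C * Aᴴ) = C * Aᴴ * (A * (C * Aᴴ))ᴴ := by rw [hAX, Matrix.mul_assoc]
      _ = C * (A * (C * Aᴴ) * A)ᴴ := by rw [conjTranspose_mul _ A, Matrix.mul_assoc]
      _ = C * Aᴴ := by rw [hAXA]
  · rw [conjTranspose_mul, conjTranspose_mul, hC.eq, conjTranspose_conjTranspose,
      ← Matrix.mul_assoc, ← hCB.eq, Matrix.mul_assoc]

theorem exists_isMP (A : Matrix m n ℍ) : ∃ X, IsMP A X := by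
  classical
  have hB : (Aᴴ * A).IsHermitian := isHermitian_conjTranspose_mul_self A
  have hcancel (Y : Matrix n n ℍ) (hY : (Aᴴ * A) ^ 2 * Y = 0) : Aᴴ * A * Y = 0 := by
    refine mul_eq_zero_of_conjTranspose_mul_self_mul_eq_zero ?_
    rwa [hB.eq, ← sq]
  obtain ⟨p, hp⟩ := exists_sq_mul_aeval_eq_self (IsAlgebraic.of_finite ℝ (Aᴴ * A)) hcancel
  have hC : (aeval (Aᴴ * A) p).IsHermitian := hB.isSelfAdjoint.aeval p
  have hCB : Commute (aeval (Aᴴ * A) p) (Aᴴ * A) := by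
    simpa using (Commute.all p X).map (aeval (Aᴴ * A))
  exact ⟨_, isMP_mul_conjTranspose hC hCB hp⟩

theorem IsMP.eq {A : Matrix m n ℍ} {X Y : Matrix n m ℍ} (hX : IsMP A X) (hY : IsMP A Y) :
    X = Y := by
  obtain ⟨hX₁, hX₂, hX₃, hX₄⟩ := hX
  obtain ⟨hY₁, hY₂, hY₃, hY₄⟩ := hY
  have hAX : A * X = A * Y :=
    calc A * X = (A * Y * A * X)ᴴ := by rw [hY₁, hX₃]
      _ = (A * X)ᴴ * (A * Y)ᴴ := by rw [Matrix.mul_assoc (A * Y), conjTranspose_mul]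
      _ = A * Y := by rw [hX₃, hY₃, ← Matrix.mul_assoc, hX₁]
  have hXA : X * A = Y * A :=
    calc X * A = (X * A * Y * A)ᴴ := by
          rw [Matrix.mul_assoc (X * A), Matrix.mul_assoc X, ← Matrix.mul_assoc A, hY₁, hX₄]
      _ = (Y * A)ᴴ * (X * A)ᴴ := by rw [Matrix.mul_assoc (X * A), conjTranspose_mul]
      _ = Y * A := by rw [hX₄, hY₄, Matrix.mul_assoc Y, ← Matrix.mul_assoc A, hX₁]
  calc X = X * A * X := hX₂.symm
    _ = Y * A * Y := by rw [Matrix.mul_assoc, hAX, ← Matrix.mul_assoc, hXA]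
    _ = Y := hY₂

end MoorePenrose

/-- Every quaternion matrix has a unique Moore–Penrose inverse. -/
theorem exists_unique_moorePenrose {m n : Type*} [Fintype m] [Fintype n]
    (A : Matrix m n (Quaternion ℝ)) :
    ∃! X : Matrix n m (Quaternion ℝ), IsMP A X := by
  obtain ⟨X, hX⟩ := exists_isMP A
  exact ⟨X, hX, fun Y hY => hY.eq hX⟩
end

section
/- Let A ∈ ℍ^{m×k}, B ∈ ℍ^{o×n}, E ∈ ℍ^{m×n} be quaternion matrices. The equation A X + Y B = E has a solution (X, Y) with X ∈ ℍ^{k×n}, Y ∈ ℍ^{m×o} if and only if R_A E L_B = 0; in that case, a pair (X, Y) is a solution if and only if there exist matrices T₁ ∈ ℍ^{k×o}, T₂ ∈ ℍ^{k×n}, T₃ ∈ ℍ^{m×o} such that X = A† E − T₁ B + L_A T₂ and Y = R_A E B† + A T₁ + T₃ R_B. -/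
/-!
From `A A† A = A` and `B B† B = B` we get `R_A A = 0` and `B L_B = 0`, so
`R_A E L_B = R_A (A X + Y B) L_B` vanishes for every solution. Conversely every pair of the stated
form is a solution once `R_A E = R_A E B† B`; `T₁ = T₂ = T₃ = 0` gives a particular solution, and
a given solution `(X, Y)` is recovered from `T₁ = A† Y`, `T₂ = X`, `T₃ = R_A Y`.
-/

open Matrix

namespace Matrix

variable {R : Type*} [Ring R] {m k o n : Type*} [Fintype m] [Fintype k] [Fintype o] [Fintype n]

theorem one_sub_mul_mul_self_eq_zero [DecidableEq m] {A : Matrix m k R} {G : Matrix k m R}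
    (hA : A * G * A = A) : (1 - A * G) * A = 0 := by
  rw [Matrix.sub_mul, Matrix.one_mul, hA, sub_self]

theorem mul_one_sub_mul_self_eq_zero [DecidableEq o] {B : Matrix k o R} {H : Matrix o k R}
    (hB : B * H * B = B) : B * (1 - H * B) = 0 := by
  rw [Matrix.mul_sub, Matrix.mul_one, ← Matrix.mul_assoc, hB, sub_self]

theorem one_sub_mul_mul_mul_one_sub_eq_zero_of_mul_add_mul_eq [DecidableEq m] [DecidableEq n]
    {A : Matrix m k R} {G : Matrix k m R} {B : Matrix o n R} {H : Matrix n o R}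
    {E : Matrix m n R} {X : Matrix k n R} {Y : Matrix m o R}
    (hA : A * G * A = A) (hB : B * H * B = B) (hXY : A * X + Y * B = E) :
    (1 - A * G) * E * (1 - H * B) = 0 := by
  rw [← hXY, Matrix.mul_add, Matrix.add_mul, ← Matrix.mul_assoc _ A X,
    one_sub_mul_mul_self_eq_zero hA, Matrix.mul_assoc _ (Y * B), Matrix.mul_assoc Y B,
    mul_one_sub_mul_self_eq_zero hB]
  simp

theorem mul_add_mul_eq_of_one_sub_mul_mul_mul_one_sub_eq_zero [DecidableEq m] [DecidableEq n]
    [DecidableEq k] [DecidableEq o]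
    {A : Matrix m k R} {G : Matrix k m R} {B : Matrix o n R} {H : Matrix n o R}
    {E : Matrix m n R} (hA : A * G * A = A) (hB : B * H * B = B)
    (hE : (1 - A * G) * E * (1 - H * B) = 0)
    (T₁ : Matrix k o R) (T₂ : Matrix k n R) (T₃ : Matrix m o R) :
    A * (G * E - T₁ * B + (1 - G * A) * T₂) + ((1 - A * G) * E * H + A * T₁ + T₃ * (1 - B * H)) * B
      = E := by
  have hAL : A * (1 - G * A) = 0 := mul_one_sub_mul_self_eq_zero hA
  have hRB : (1 - B * H) * B = 0 := one_sub_mul_mul_self_eq_zero hB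
  have hRAE : (1 - A * G) * E * H * B = (1 - A * G) * E := by
    rwa [Matrix.mul_sub, Matrix.mul_one, ← Matrix.mul_assoc, sub_eq_zero, eq_comm] at hE
  rw [Matrix.mul_add, Matrix.mul_sub, ← Matrix.mul_assoc A (1 - G * A), hAL, Matrix.add_mul,
    Matrix.add_mul, Matrix.mul_assoc T₃, hRB, hRAE, Matrix.sub_mul, Matrix.one_mul]
  simp only [Matrix.zero_mul, Matrix.mul_zero, add_zero, Matrix.mul_assoc]
  abel

theorem eq_general_solution_of_mul_add_mul_eq [DecidableEq m] [DecidableEq k] [DecidableEq o]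
    {A : Matrix m k R} {G : Matrix k m R} {B : Matrix o n R} {H : Matrix n o R}
    {E : Matrix m n R} {X : Matrix k n R} {Y : Matrix m o R}
    (hA : A * G * A = A) (hXY : A * X + Y * B = E) :
    X = G * E - (G * Y) * B + (1 - G * A) * X ∧
      Y = (1 - A * G) * E * H + A * (G * Y) + (1 - A * G) * Y * (1 - B * H) := by
  have hRAE : (1 - A * G) * E = (1 - A * G) * Y * B := by
    rw [← hXY, Matrix.mul_add, ← Matrix.mul_assoc, one_sub_mul_mul_self_eq_zero hA,
      Matrix.zero_mul, zero_add, Matrix.mul_assoc]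
  constructor
  · rw [← hXY, Matrix.mul_add, Matrix.sub_mul, Matrix.one_mul]
    simp only [Matrix.mul_assoc]
    abel
  · rw [hRAE]
    simp only [Matrix.sub_mul, Matrix.mul_sub, Matrix.one_mul, Matrix.mul_one, Matrix.mul_assoc]
    abel

end Matrix

/-- The equation `A X + Y B = E` is solvable iff `R_A E L_B = 0`, and in that case
`(X, Y)` is a solution iff
`X = A† E − T₁ B + L_A T₂` and `Y = R_A E B† + A T₁ + T₃ R_B` for some `T₁ T₂ T₃`. -/
theorem ax_plus_yb_eq_e {m k o n : Type*}
    [Fintype m] [Fintype k] [Fintype o] [Fintype n]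
    [DecidableEq m] [DecidableEq n] [DecidableEq k] [DecidableEq o]
    (A : Matrix m k (Quaternion ℝ)) (B : Matrix o n (Quaternion ℝ))
    (E : Matrix m n (Quaternion ℝ))
    (Ad : Matrix k m (Quaternion ℝ)) (Bd : Matrix n o (Quaternion ℝ))
    (hA : IsMP A Ad) (hB : IsMP B Bd) :
    ((∃ (X : Matrix k n (Quaternion ℝ)) (Y : Matrix m o (Quaternion ℝ)),
        A * X + Y * B = E) ↔ (1 - A * Ad) * E * (1 - Bd * B) = 0) ∧
    ((1 - A * Ad) * E * (1 - Bd * B) = 0 →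
      ∀ (X : Matrix k n (Quaternion ℝ)) (Y : Matrix m o (Quaternion ℝ)),
        A * X + Y * B = E ↔
          ∃ (T₁ : Matrix k o (Quaternion ℝ)) (T₂ : Matrix k n (Quaternion ℝ))
            (T₃ : Matrix m o (Quaternion ℝ)),
            X = Ad * E - T₁ * B + (1 - Ad * A) * T₂ ∧
            Y = (1 - A * Ad) * E * Bd + A * T₁ + T₃ * (1 - B * Bd)) := by
  have solution := mul_add_mul_eq_of_one_sub_mul_mul_mul_one_sub_eq_zero (E := E) hA.1 hB.1
  refine ⟨⟨?_, fun hE ↦ ⟨_, _, by simpa using solution hE 0 0 0⟩⟩, fun hE X Y ↦ ⟨?_, ?_⟩⟩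
  · rintro ⟨X, Y, hXY⟩
    exact one_sub_mul_mul_mul_one_sub_eq_zero_of_mul_add_mul_eq hA.1 hB.1 hXY
  · intro hXY
    exact ⟨_, _, _, eq_general_solution_of_mul_add_mul_eq hA.1 hXY⟩
  · rintro ⟨T₁, T₂, T₃, rfl, rfl⟩
    exact solution hE T₁ T₂ T₃
end

section
/- Let A ∈ ℍ^{m×a}, B ∈ ℍ^{b×n}, C ∈ ℍ^{m×c}, D ∈ ℍ^{d×n}, E ∈ ℍ^{m×n} be quaternion matrices, set P = R_A C, Q = D L_B, S = C L_P, and assume R_P R_A E = 0, E L_B L_Q = 0, R_A E L_D = 0 and R_C E L_B = 0. Then for arbitrary quaternion matrices U₁, U₂, U₃, U₄, U₅ of the appropriate sizes, the pair X = A† E B† − A† C P† E B† − A† S C† E Q† D B† − A† S U₂ R_Q D B† + L_A U₄ + U₅ R_B and Y = P† E D† + S† S C† E Q† + L_P L_S U₁ + L_P U₂ R_Q + U₃ R_D satisfies A X B + C Y D = E. -/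
open Matrix

/-!
Split `X` and `Y` into a particular part, built from `E`, and a free part, built from the `Uᵢ`.
The free parts of `A X B` and `C Y D` are `∓ S U₂ R_Q D` and cancel (by `A A† S = S`,
`D B† B = D - Q` and `R_Q Q = 0`). The particular part gives `E B† B + (C P† + S C†) E L_B`, and
the consistency conditions turn the second summand into `E L_B`. What makes this work are the
annihilation identities `P† A A† = 0` and `B† B Q† = 0`: a Moore–Penrose inverse `P†` factors as
`P† P†ᴴ Pᴴ`, and `A A†` is a hermitian projection killing `P = R_A C`; dually for `Q`.
-/

open scoped Quaternion

namespace IsMP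

variable {m n k : Type*} [Fintype m] [Fintype n] {A : Matrix m n ℍ[ℝ]} {X : Matrix n m ℍ[ℝ]}

theorem mul_pinv_mul (h : IsMP A X) : A * X * A = A := h.1

theorem pinv_mul_pinv (h : IsMP A X) : X * A * X = X := h.2.1

theorem conjTranspose_mul_pinv (h : IsMP A X) : (A * X)ᴴ = A * X := h.2.2.1

theorem conjTranspose_pinv_mul (h : IsMP A X) : (X * A)ᴴ = X * A := h.2.2.2

theorem isIdempotentElem_mul_pinv (h : IsMP A X) : IsIdempotentElem (A * X) := by
  rw [IsIdempotentElem, ← Matrix.mul_assoc, h.mul_pinv_mul]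

theorem isIdempotentElem_pinv_mul (h : IsMP A X) : IsIdempotentElem (X * A) := by
  rw [IsIdempotentElem, ← Matrix.mul_assoc, h.pinv_mul_pinv]

theorem mul_one_sub_pinv_mul [DecidableEq n] (h : IsMP A X) : A * (1 - X * A) = 0 := by
  rw [Matrix.mul_sub, Matrix.mul_one, ← Matrix.mul_assoc, h.mul_pinv_mul, sub_self]

theorem one_sub_mul_pinv_mul [DecidableEq m] (h : IsMP A X) : (1 - A * X) * A = 0 := by
  rw [Matrix.sub_mul, Matrix.one_mul, h.mul_pinv_mul, sub_self]

theorem one_sub_pinv_mul_mul_conjTranspose [DecidableEq n] (h : IsMP A X) :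
    (1 - X * A) * Aᴴ = 0 := by
  rw [Matrix.sub_mul, Matrix.one_mul, ← h.conjTranspose_pinv_mul, ← conjTranspose_mul,
    ← Matrix.mul_assoc, h.mul_pinv_mul, sub_self]

/-- `X = X Xᴴ Aᴴ`, so `X` kills everything `Aᴴ` kills. -/
theorem pinv_mul_eq_zero [Fintype k] (h : IsMP A X) {M : Matrix m k ℍ[ℝ]} (hM : Mᴴ * A = 0) :
    X * M = 0 := by
  calc X * M = X * (A * X)ᴴ * M := by
        rw [h.conjTranspose_mul_pinv, ← Matrix.mul_assoc, h.pinv_mul_pinv]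
    _ = X * Xᴴ * (Mᴴ * A)ᴴ := by
      simp only [conjTranspose_mul, conjTranspose_conjTranspose, Matrix.mul_assoc]
    _ = 0 := by rw [hM, conjTranspose_zero, Matrix.mul_zero]

/-- `X = Aᴴ Xᴴ X`, so `X` kills on the right everything `Aᴴ` kills on the right. -/
theorem mul_pinv_eq_zero [Fintype k] (h : IsMP A X) {M : Matrix k n ℍ[ℝ]} (hM : A * Mᴴ = 0) :
    M * X = 0 := by
  calc M * X = M * (X * A)ᴴ * X := by
        rw [h.conjTranspose_pinv_mul, Matrix.mul_assoc, h.pinv_mul_pinv]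
    _ = (A * Mᴴ)ᴴ * Xᴴ * X := by
      simp only [conjTranspose_mul, conjTranspose_conjTranspose, Matrix.mul_assoc]
    _ = 0 := by rw [hM, conjTranspose_zero, Matrix.zero_mul, Matrix.zero_mul]

end IsMP

section SolutionFormula

variable {m a b n c d : Type*} [Fintype m] [Fintype a] [Fintype b] [Fintype n] [Fintype c]
  [Fintype d]
  {A : Matrix m a ℍ[ℝ]} {Ad : Matrix a m ℍ[ℝ]} {B : Matrix b n ℍ[ℝ]} {Bd : Matrix n b ℍ[ℝ]}
  {C : Matrix m c ℍ[ℝ]} {Cd : Matrix c m ℍ[ℝ]} {D : Matrix d n ℍ[ℝ]} {Dd : Matrix n d ℍ[ℝ]}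
  {E : Matrix m n ℍ[ℝ]}
  {P : Matrix m c ℍ[ℝ]} {Pd : Matrix c m ℍ[ℝ]} {Q : Matrix d n ℍ[ℝ]} {Qd : Matrix n d ℍ[ℝ]}
  {S : Matrix m c ℍ[ℝ]} {Sd : Matrix c m ℍ[ℝ]}

omit [Fintype c] in
theorem mul_pinv_mul_eq_sub_of_eq_one_sub_mul [DecidableEq m] (hP : P = (1 - A * Ad) * C) :
    A * Ad * C = C - P := by
  rw [hP, Matrix.sub_mul, Matrix.one_mul, sub_sub_cancel]

omit [Fintype d] in
theorem mul_pinv_mul_eq_sub_of_eq_mul_one_sub [DecidableEq n] (hQ : Q = D * (1 - Bd * B)) :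
    D * (Bd * B) = D - Q := by
  rw [hQ, Matrix.mul_sub, Matrix.mul_one, sub_sub_cancel]

theorem pinv_mul_mul_pinv_eq_zero_of_eq_sub_mul [DecidableEq m] (hA : IsMP A Ad) (hPd : IsMP P Pd)
    (hP : P = (1 - A * Ad) * C) : Pd * (A * Ad) = 0 :=
  hPd.pinv_mul_eq_zero <| by
    rw [hA.conjTranspose_mul_pinv, hP, ← Matrix.mul_assoc,
      hA.isIdempotentElem_mul_pinv.mul_one_sub_self, Matrix.zero_mul]

theorem pinv_mul_one_sub_mul_pinv_of_eq_sub_mul [DecidableEq m] (hA : IsMP A Ad) (hPd : IsMP P Pd)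
    (hP : P = (1 - A * Ad) * C) : Pd * (1 - A * Ad) = Pd := by
  rw [Matrix.mul_sub, Matrix.mul_one, pinv_mul_mul_pinv_eq_zero_of_eq_sub_mul hA hPd hP, sub_zero]

theorem mul_pinv_mul_pinv_eq_zero_of_eq_mul_sub [DecidableEq n] (hB : IsMP B Bd) (hQd : IsMP Q Qd)
    (hQ : Q = D * (1 - Bd * B)) : Bd * B * Qd = 0 :=
  hQd.mul_pinv_eq_zero <| by
    rw [hB.conjTranspose_pinv_mul, hQ, Matrix.mul_assoc,
      hB.isIdempotentElem_pinv_mul.one_sub_mul_self, Matrix.mul_zero]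

theorem mul_pinv_mul_of_eq_sub_mul_mul_sub [DecidableEq m] [DecidableEq c] (hPd : IsMP P Pd)
    (hP : P = (1 - A * Ad) * C) (hS : S = C * (1 - Pd * P)) : A * Ad * S = S := by
  rw [hS, ← Matrix.mul_assoc, mul_pinv_mul_eq_sub_of_eq_one_sub_mul hP, Matrix.sub_mul,
    hPd.mul_one_sub_pinv_mul, sub_zero]

/-- `C = S + C P† P` and `P S† = 0`, the latter because `S Pᴴ = C L_P Pᴴ = 0`. -/
theorem mul_pinv_mul_of_eq_mul_sub [DecidableEq c] (hPd : IsMP P Pd) (hSd : IsMP S Sd)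
    (hS : S = C * (1 - Pd * P)) : C * Sd * S = S := by
  have hPSd : P * Sd = 0 := hSd.mul_pinv_eq_zero <| by
    rw [hS, Matrix.mul_assoc, hPd.one_sub_pinv_mul_mul_conjTranspose, Matrix.mul_zero]
  have hC : C = S + C * Pd * P := by
    rw [hS, Matrix.mul_sub, Matrix.mul_one, Matrix.mul_assoc, sub_add_cancel]
  calc C * Sd * S = S * Sd * S + C * Pd * (P * Sd) * S := by
        conv_lhs => rw [hC]
        simp only [Matrix.add_mul, Matrix.mul_assoc]
    _ = S := by rw [hSd.mul_pinv_mul, hPSd, Matrix.mul_zero, Matrix.zero_mul, add_zero]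

omit [Fintype n] in
theorem mul_pinv_mul_eq_sub_mul_pinv_mul [DecidableEq m] (hA : IsMP A Ad) (hPd : IsMP P Pd)
    (hP : P = (1 - A * Ad) * C) (h1 : (1 - P * Pd) * (1 - A * Ad) * E = 0) :
    A * Ad * E = E - P * (Pd * E) := by
  have hR : (1 - P * Pd) * (1 - A * Ad) = 1 - A * Ad - P * Pd := by
    rw [Matrix.sub_mul, Matrix.one_mul, Matrix.mul_assoc,
      pinv_mul_one_sub_mul_pinv_of_eq_sub_mul hA hPd hP]
  calc A * Ad * E = A * Ad * E + (1 - A * Ad - P * Pd) * E := by rw [← hR, h1, add_zero]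
    _ = E - P * (Pd * E) := by
      simp only [Matrix.sub_mul, Matrix.one_mul, Matrix.mul_assoc]
      abel

theorem pinv_mul_mul_pinv_mul_mul_eq [DecidableEq m] [DecidableEq n] (hA : IsMP A Ad)
    (hPd : IsMP P Pd) (hP : P = (1 - A * Ad) * C) (h3 : (1 - A * Ad) * E * (1 - Dd * D) = 0) :
    Pd * (E * (Dd * D)) = Pd * E := by
  calc Pd * (E * (Dd * D)) = Pd * (E * (Dd * D)) + Pd * (1 - A * Ad) * E * (1 - Dd * D) := by
        simp only [Matrix.mul_assoc] at h3 ⊢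
        rw [h3, Matrix.mul_zero, add_zero]
    _ = Pd * E := by
      rw [pinv_mul_one_sub_mul_pinv_of_eq_sub_mul hA hPd hP]
      simp only [Matrix.mul_sub, Matrix.mul_one, Matrix.mul_assoc]
      abel

omit [Fintype m] in
theorem mul_pinv_mul_eq_mul_one_sub [DecidableEq n] (hB : IsMP B Bd) (hQd : IsMP Q Qd)
    (hQ : Q = D * (1 - Bd * B)) (h2 : E * (1 - Bd * B) * (1 - Qd * Q) = 0) :
    E * (Qd * Q) = E * (1 - Bd * B) := by
  have hLQ : (1 - Bd * B) * (Qd * Q) = Qd * Q := by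
    rw [Matrix.sub_mul, Matrix.one_mul, ← Matrix.mul_assoc (Bd * B),
      mul_pinv_mul_pinv_eq_zero_of_eq_mul_sub hB hQd hQ, Matrix.zero_mul, sub_zero]
  calc E * (Qd * Q) = E * (1 - Bd * B) - E * (1 - Bd * B) * (1 - Qd * Q) := by
        rw [Matrix.mul_sub (E * (1 - Bd * B)), Matrix.mul_one, Matrix.mul_assoc, hLQ,
          sub_sub_cancel]
    _ = E * (1 - Bd * B) := by rw [h2, sub_zero]

/-- With `F = E L_B`: `C C† F = F` by `h4`, and `P† P C† F = P† R_A F = P† F`. -/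
theorem add_mul_mul_one_sub_pinv_mul [DecidableEq m] [DecidableEq n] [DecidableEq c]
    (hA : IsMP A Ad) (hPd : IsMP P Pd) (hP : P = (1 - A * Ad) * C) (hS : S = C * (1 - Pd * P))
    (h4 : (1 - C * Cd) * E * (1 - Bd * B) = 0) :
    (C * Pd + S * Cd) * (E * (1 - Bd * B)) = E * (1 - Bd * B) := by
  set F := E * (1 - Bd * B)
  have hF : C * (Cd * F) = F := by
    calc C * (Cd * F) = C * (Cd * F) + (1 - C * Cd) * E * (1 - Bd * B) := by rw [h4, add_zero]
      _ = F := by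
        simp only [F, Matrix.sub_mul, Matrix.one_mul, Matrix.mul_assoc]
        abel
  calc (C * Pd + S * Cd) * F = C * (Pd * F) + C * (Cd * F) - C * (Pd * (P * (Cd * F))) := by
        rw [hS]
        simp only [Matrix.add_mul, Matrix.sub_mul, Matrix.mul_sub, Matrix.mul_one,
          Matrix.mul_assoc]
        abel
    _ = F := by
      rw [hP, Matrix.mul_assoc, hF, ← Matrix.mul_assoc Pd (1 - A * Ad),
        pinv_mul_one_sub_mul_pinv_of_eq_sub_mul hA hPd hP, add_sub_cancel_left]

theorem particular_part_solves [DecidableEq m] [DecidableEq n] [DecidableEq c]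
    (hA : IsMP A Ad) (hB : IsMP B Bd) (hP : P = (1 - A * Ad) * C) (hQ : Q = D * (1 - Bd * B))
    (hPd : IsMP P Pd) (hQd : IsMP Q Qd) (hS : S = C * (1 - Pd * P)) (hSd : IsMP S Sd)
    (h1 : (1 - P * Pd) * (1 - A * Ad) * E = 0)
    (h2 : E * (1 - Bd * B) * (1 - Qd * Q) = 0)
    (h3 : (1 - A * Ad) * E * (1 - Dd * D) = 0)
    (h4 : (1 - C * Cd) * E * (1 - Bd * B) = 0) :
    A * (Ad * E * Bd - Ad * C * Pd * E * Bd - Ad * S * Cd * E * Qd * D * Bd) * B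
      + C * (Pd * E * Dd + Sd * S * Cd * E * Qd) * D = E := by
  calc _ = (A * Ad * E - A * Ad * C * (Pd * E)) * (Bd * B)
        - A * Ad * S * (Cd * E * Qd) * (D * (Bd * B)) + C * (Pd * (E * (Dd * D)))
        + C * Sd * S * (Cd * E * Qd) * D := by
        simp only [Matrix.mul_sub, Matrix.sub_mul, Matrix.mul_add, Matrix.add_mul,
          Matrix.mul_assoc, add_assoc]
    _ = (E - P * (Pd * E) - (C - P) * (Pd * E)) * (Bd * B) - S * (Cd * E * Qd) * (D - Q)
        + C * (Pd * E) + S * (Cd * E * Qd) * D := by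
        rw [mul_pinv_mul_eq_sub_mul_pinv_mul hA hPd hP h1,
          mul_pinv_mul_eq_sub_of_eq_one_sub_mul hP, mul_pinv_mul_of_eq_sub_mul_mul_sub hPd hP hS,
          mul_pinv_mul_eq_sub_of_eq_mul_one_sub hQ,
          pinv_mul_mul_pinv_mul_mul_eq hA hPd hP h3, mul_pinv_mul_of_eq_mul_sub hPd hSd hS]
    _ = E * (Bd * B) + (C * Pd + S * Cd) * (E * (1 - Bd * B)) := by
        simp only [Matrix.mul_sub, Matrix.sub_mul, Matrix.add_mul, Matrix.mul_assoc,
          mul_pinv_mul_eq_mul_one_sub hB hQd hQ h2, Matrix.mul_one]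
        abel
    _ = E := by
      rw [add_mul_mul_one_sub_pinv_mul hA hPd hP hS h4, ← Matrix.mul_add, add_sub_cancel,
        Matrix.mul_one]

theorem free_part_Y_contribution [DecidableEq c] [DecidableEq d] (hD : IsMP D Dd)
    (hS : S = C * (1 - Pd * P)) (hSd : IsMP S Sd) (U₁ U₂ U₃ : Matrix c d ℍ[ℝ]) :
    C * ((1 - Pd * P) * (1 - Sd * S) * U₁ + (1 - Pd * P) * U₂ * (1 - Q * Qd)
      + U₃ * (1 - D * Dd)) * D = S * U₂ * (1 - Q * Qd) * D := by
  simp only [Matrix.mul_add, Matrix.add_mul, ← Matrix.mul_assoc, ← hS,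
    hSd.mul_one_sub_pinv_mul, Matrix.zero_mul, zero_add]
  rw [Matrix.mul_assoc _ (1 - D * Dd), hD.one_sub_mul_pinv_mul, Matrix.mul_zero, add_zero]

theorem free_part_X_contribution [DecidableEq m] [DecidableEq a] [DecidableEq b] [DecidableEq c]
    [DecidableEq n] [DecidableEq d] (hA : IsMP A Ad) (hB : IsMP B Bd)
    (hP : P = (1 - A * Ad) * C) (hQ : Q = D * (1 - Bd * B)) (hPd : IsMP P Pd)
    (hQd : IsMP Q Qd) (hS : S = C * (1 - Pd * P)) (U₂ : Matrix c d ℍ[ℝ])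
    (U₄ U₅ : Matrix a b ℍ[ℝ]) :
    A * (Ad * S * U₂ * (1 - Q * Qd) * D * Bd - (1 - Ad * A) * U₄ - U₅ * (1 - B * Bd)) * B
      = S * U₂ * (1 - Q * Qd) * D := by
  calc _ = A * Ad * S * U₂ * (1 - Q * Qd) * (D * (Bd * B)) - A * (1 - Ad * A) * U₄ * B
        - A * U₅ * ((1 - B * Bd) * B) := by
        simp only [Matrix.mul_sub, Matrix.sub_mul, Matrix.mul_assoc]
    _ = S * U₂ * (1 - Q * Qd) * (D - Q) := by
      rw [mul_pinv_mul_of_eq_sub_mul_mul_sub hPd hP hS, mul_pinv_mul_eq_sub_of_eq_mul_one_sub hQ,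
        hA.mul_one_sub_pinv_mul,
        hB.one_sub_mul_pinv_mul, Matrix.zero_mul, Matrix.zero_mul, Matrix.mul_zero, sub_zero,
        sub_zero]
    _ = S * U₂ * (1 - Q * Qd) * D := by
      rw [Matrix.mul_sub, Matrix.mul_assoc _ (1 - Q * Qd) Q, hQd.one_sub_mul_pinv_mul,
        Matrix.mul_zero, sub_zero]

end SolutionFormula

theorem axb_plus_cyd_solution_formula_general {m a b n c d : Type*}
    [Fintype m] [Fintype a] [Fintype b] [Fintype n] [Fintype c] [Fintype d]
    [DecidableEq m] [DecidableEq n] [DecidableEq a] [DecidableEq b]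
    [DecidableEq c] [DecidableEq d]
    (A : Matrix m a (Quaternion ℝ)) (B : Matrix b n (Quaternion ℝ))
    (C : Matrix m c (Quaternion ℝ)) (D : Matrix d n (Quaternion ℝ))
    (E : Matrix m n (Quaternion ℝ))
    (Ad : Matrix a m (Quaternion ℝ)) (Bd : Matrix n b (Quaternion ℝ))
    (Cd : Matrix c m (Quaternion ℝ)) (Dd : Matrix n d (Quaternion ℝ))
    (hA : IsMP A Ad) (hB : IsMP B Bd) (hD : IsMP D Dd)
    (P : Matrix m c (Quaternion ℝ)) (Q : Matrix d n (Quaternion ℝ))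
    (hP : P = (1 - A * Ad) * C) (hQ : Q = D * (1 - Bd * B))
    (Pd : Matrix c m (Quaternion ℝ)) (Qd : Matrix n d (Quaternion ℝ))
    (hPd : IsMP P Pd) (hQd : IsMP Q Qd)
    (S : Matrix m c (Quaternion ℝ)) (hS : S = C * (1 - Pd * P))
    (Sd : Matrix c m (Quaternion ℝ)) (hSd : IsMP S Sd)
    (h1 : (1 - P * Pd) * (1 - A * Ad) * E = 0)
    (h2 : E * (1 - Bd * B) * (1 - Qd * Q) = 0)
    (h3 : (1 - A * Ad) * E * (1 - Dd * D) = 0)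
    (h4 : (1 - C * Cd) * E * (1 - Bd * B) = 0) :
    ∀ (U₁ U₂ U₃ : Matrix c d (Quaternion ℝ)) (U₄ U₅ : Matrix a b (Quaternion ℝ)),
      ∀ (X : Matrix a b (Quaternion ℝ)) (Y : Matrix c d (Quaternion ℝ)),
        X = Ad * E * Bd - Ad * C * Pd * E * Bd - Ad * S * Cd * E * Qd * D * Bd
            - Ad * S * U₂ * (1 - Q * Qd) * D * Bd
            + (1 - Ad * A) * U₄ + U₅ * (1 - B * Bd) →
        Y = Pd * E * Dd + Sd * S * Cd * E * Qd + (1 - Pd * P) * (1 - Sd * S) * U₁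
            + (1 - Pd * P) * U₂ * (1 - Q * Qd) + U₃ * (1 - D * Dd) →
        A * X * B + C * Y * D = E := by
  intro U₁ U₂ U₃ U₄ U₅ X Y hX hY
  calc A * X * B + C * Y * D
      = (A * (Ad * E * Bd - Ad * C * Pd * E * Bd - Ad * S * Cd * E * Qd * D * Bd) * B
          + C * (Pd * E * Dd + Sd * S * Cd * E * Qd) * D)
        + (C * ((1 - Pd * P) * (1 - Sd * S) * U₁ + (1 - Pd * P) * U₂ * (1 - Q * Qd)
            + U₃ * (1 - D * Dd)) * D
          - A * (Ad * S * U₂ * (1 - Q * Qd) * D * Bd - (1 - Ad * A) * U₄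
            - U₅ * (1 - B * Bd)) * B) := by
        rw [hX, hY]
        simp only [Matrix.mul_add, Matrix.add_mul, Matrix.mul_sub, Matrix.sub_mul]
        abel
    _ = E := by
      rw [particular_part_solves hA hB hP hQ hPd hQd hS hSd h1 h2 h3 h4,
        free_part_Y_contribution hD hS hSd, free_part_X_contribution hA hB hP hQ hPd hQd hS,
        sub_self, add_zero]

/-- With `P = R_A C`, `Q = D L_B`, `S = C L_P`, if the consistency conditions hold,
then for arbitrary `U₁, …, U₅` the displayed pair `(X, Y)` solves
`A X B + C Y D = E`. -/
theorem axb_plus_cyd_solution_formula {m a b n c d : Type*}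
    [Fintype m] [Fintype a] [Fintype b] [Fintype n] [Fintype c] [Fintype d]
    [DecidableEq m] [DecidableEq n] [DecidableEq a] [DecidableEq b]
    [DecidableEq c] [DecidableEq d]
    (A : Matrix m a (Quaternion ℝ)) (B : Matrix b n (Quaternion ℝ))
    (C : Matrix m c (Quaternion ℝ)) (D : Matrix d n (Quaternion ℝ))
    (E : Matrix m n (Quaternion ℝ))
    (Ad : Matrix a m (Quaternion ℝ)) (Bd : Matrix n b (Quaternion ℝ))
    (Cd : Matrix c m (Quaternion ℝ)) (Dd : Matrix n d (Quaternion ℝ))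
    (hA : IsMP A Ad) (hB : IsMP B Bd) (hC : IsMP C Cd) (hD : IsMP D Dd)
    (P : Matrix m c (Quaternion ℝ)) (Q : Matrix d n (Quaternion ℝ))
    (hP : P = (1 - A * Ad) * C) (hQ : Q = D * (1 - Bd * B))
    (Pd : Matrix c m (Quaternion ℝ)) (Qd : Matrix n d (Quaternion ℝ))
    (hPd : IsMP P Pd) (hQd : IsMP Q Qd)
    (S : Matrix m c (Quaternion ℝ)) (hS : S = C * (1 - Pd * P))
    (Sd : Matrix c m (Quaternion ℝ)) (hSd : IsMP S Sd)
    (h1 : (1 - P * Pd) * (1 - A * Ad) * E = 0)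
    (h2 : E * (1 - Bd * B) * (1 - Qd * Q) = 0)
    (h3 : (1 - A * Ad) * E * (1 - Dd * D) = 0)
    (h4 : (1 - C * Cd) * E * (1 - Bd * B) = 0) :
    ∀ (U₁ U₂ U₃ : Matrix c d (Quaternion ℝ)) (U₄ U₅ : Matrix a b (Quaternion ℝ)),
      ∀ (X : Matrix a b (Quaternion ℝ)) (Y : Matrix c d (Quaternion ℝ)),
        X = Ad * E * Bd - Ad * C * Pd * E * Bd - Ad * S * Cd * E * Qd * D * Bd
            - Ad * S * U₂ * (1 - Q * Qd) * D * Bd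
            + (1 - Ad * A) * U₄ + U₅ * (1 - B * Bd) →
        Y = Pd * E * Dd + Sd * S * Cd * E * Qd + (1 - Pd * P) * (1 - Sd * S) * U₁
            + (1 - Pd * P) * U₂ * (1 - Q * Qd) + U₃ * (1 - D * Dd) →
        A * X * B + C * Y * D = E :=
  axb_plus_cyd_solution_formula_general A B C D E Ad Bd Cd Dd hA hB hD P Q hP hQ Pd Qd hPd hQd S hS
    Sd hSd h1 h2 h3 h4
end

section
/- Let A ∈ ℍ^{m×k}, B ∈ ℍ^{o×n}, C ∈ ℍ^{m×p}, D ∈ ℍ^{r×n}, F ∈ ℍ^{m×l}, G ∈ ℍ^{s×n}, E ∈ ℍ^{m×n} be quaternion matrices and set A₀ = R_A C, B₀ = D L_B, C₀ = R_A F, D₀ = G L_B, E₀ = R_A E L_B, M = R_{A₀} C₀, N = D₀ L_{B₀}, S = C₀ L_M. If (X, Y, Z, W) with X ∈ ℍ^{k×n}, Y ∈ ℍ^{m×o}, Z ∈ ℍ^{p×r}, W ∈ ℍ^{l×s} is any solution of A X + Y B + C Z D + F W G = E, then there exist quaternion matrices T₁, …, T₈ of the appropriate sizes such that Z = A₀†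 E₀ B₀† − A₀† C₀ M† E₀ B₀† − A₀† S C₀† E₀ N† D₀ B₀† − A₀† S T₄ R_N D₀ B₀† + L_{A₀} T₅ + T₆ R_{B₀}, W = M† E₀ D₀† + S† S C₀† E₀ N† + L_M L_S T₇ + L_M T₄ R_N + T₈ R_{D₀}, X = A† (E − C Z D − F W G) − T₁ B + L_A T₂, and Y = R_A (E − C Z D − F W G) B† + A T₁ + T₃ R_B. -/
/-!
Multiplying `A X + Y B + C Z D + F W G = E` by `R_A` on the left and by `L_B` on the right
kills the first two terms and leaves the two-term equation `A₀ Z B₀ + C₀ W D₀ = E₀`.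
In that equation, `M†` annihilates `A₀` and `N†` is annihilated by `B₀`, which gives
`M† E₀ = M† M W D₀` and `S C₀† E₀ N† = S W N N†`; with these two identities the displayed
formulas for `Z` and `W` collapse to `Z` and `W` once one takes `T₄ = W`, `T₅ = Z`,
`T₆ = A₀† A₀ Z`, `T₇ = W N N†`, `T₈ = M† M W`. Finally `A X + Y B = E − C Z D − F W G`
is solved by `T₁ = A† Y`, `T₂ = X`, `T₃ = R_A Y`.
-/

open Matrix

open scoped Quaternion

namespace Matrix

variable {α : Type*} [Ring α]

theorem one_sub_mul_mul_eq_zero {m n : Type*} [Fintype m] [DecidableEq m] [Fintype n]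
    {A : Matrix m n α} {X : Matrix n m α} (h : A * X * A = A) : (1 - A * X) * A = 0 := by
  rw [Matrix.sub_mul, Matrix.one_mul, h, sub_self]

theorem mul_one_sub_mul_eq_zero {m n : Type*} [Fintype m] [Fintype n] [DecidableEq n]
    {A : Matrix m n α} {X : Matrix n m α} (h : A * X * A = A) : A * (1 - X * A) = 0 := by
  rw [Matrix.mul_sub, Matrix.mul_one, ← Matrix.mul_assoc, h, sub_self]

theorem mul_eq_mul_of_eq_one_sub_mul {m n k l : Type*} [Fintype m] [DecidableEq m]
    [Fintype k] {A : Matrix m k α} {Ad : Matrix k m α} {C M : Matrix m n α}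
    {Md : Matrix l m α}
    (h : Md * A = 0) (hM : M = (1 - A * Ad) * C) : Md * C = Md * M := by
  rw [hM, Matrix.sub_mul, Matrix.one_mul, Matrix.mul_sub, Matrix.mul_assoc A,
    ← Matrix.mul_assoc Md A, h, Matrix.zero_mul, sub_zero]

theorem mul_eq_mul_of_eq_mul_one_sub {m n k l : Type*} [Fintype n] [DecidableEq n]
    [Fintype k] {B : Matrix k n α} {Bd : Matrix n k α} {D N : Matrix m n α}
    {Nd : Matrix n l α}
    (h : B * Nd = 0) (hN : N = D * (1 - Bd * B)) : D * Nd = N * Nd := by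
  rw [hN, Matrix.mul_sub, Matrix.mul_one, Matrix.sub_mul, Matrix.mul_assoc D,
    Matrix.mul_assoc Bd, h, Matrix.mul_zero, Matrix.mul_zero, sub_zero]

theorem mul_mul_eq_self_of_eq_mul_one_sub {m n : Type*} [Fintype m] [Fintype n]
    [DecidableEq n] {C M S : Matrix m n α} {Cd : Matrix n m α} {P : Matrix m m α}
    {Md : Matrix n m α}
    (hC : C * Cd * C = C) (hM : M = P * C) (hS : S = C * (1 - Md * M)) :
    S * Cd * C = S := by
  have hMC : M * (Cd * C) = M := by rw [hM, Matrix.mul_assoc, ← Matrix.mul_assoc C, hC]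
  calc S * Cd * C = C * Cd * C - C * Md * (M * (Cd * C)) := by
        rw [hS]
        simp only [Matrix.mul_sub, Matrix.sub_mul, Matrix.mul_one, Matrix.mul_assoc]
    _ = S := by rw [hC, hMC, hS, Matrix.mul_sub, Matrix.mul_one, Matrix.mul_assoc]

theorem two_term_eq_of_four_term_eq {m n k o p r l s : Type*} [Fintype m] [DecidableEq m]
    [Fintype n] [DecidableEq n] [Fintype k] [Fintype o] [Fintype p] [Fintype r] [Fintype l]
    [Fintype s]
    {A : Matrix m k α} {Ad : Matrix k m α} {B : Matrix o n α} {Bd : Matrix n o α}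
    {C : Matrix m p α} {D : Matrix r n α} {F : Matrix m l α} {G : Matrix s n α}
    {E : Matrix m n α} {X : Matrix k n α} {Y : Matrix m o α} {Z : Matrix p r α}
    {W : Matrix l s α} (hA : A * Ad * A = A) (hB : B * Bd * B = B)
    (h : A * X + Y * B + C * Z * D + F * W * G = E) :
    (1 - A * Ad) * C * Z * (D * (1 - Bd * B)) + (1 - A * Ad) * F * W * (G * (1 - Bd * B)) =
      (1 - A * Ad) * E * (1 - Bd * B) := by
  rw [← h]
  simp only [Matrix.mul_add, Matrix.add_mul, Matrix.mul_assoc]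
  rw [← Matrix.mul_assoc _ A, one_sub_mul_mul_eq_zero hA, mul_one_sub_mul_eq_zero hB]
  simp only [Matrix.zero_mul, Matrix.mul_zero, zero_add]

theorem exists_solution_form_of_mul_add_mul_eq {m n k o : Type*} [Fintype m] [DecidableEq m]
    [Fintype n] [DecidableEq n] [Fintype k] [DecidableEq k] [Fintype o] [DecidableEq o]
    {A : Matrix m k α} {Ad : Matrix k m α} {B : Matrix o n α} {Bd : Matrix n o α}
    {E : Matrix m n α} {X : Matrix k n α} {Y : Matrix m o α} (hA : A * Ad * A = A)
    (h : A * X + Y * B = E) :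
    ∃ (T₁ : Matrix k o α) (T₂ : Matrix k n α) (T₃ : Matrix m o α),
      X = Ad * E - T₁ * B + (1 - Ad * A) * T₂ ∧
      Y = (1 - A * Ad) * E * Bd + A * T₁ + T₃ * (1 - B * Bd) := by
  refine ⟨Ad * Y, X, (1 - A * Ad) * Y, ?_, ?_⟩ <;> rw [← h]
  · simp only [Matrix.mul_add, Matrix.sub_mul, Matrix.one_mul, Matrix.mul_assoc]
    abel
  · rw [Matrix.mul_add, ← Matrix.mul_assoc _ A, one_sub_mul_mul_eq_zero hA]
    simp only [Matrix.zero_mul, zero_add, Matrix.mul_sub, Matrix.sub_mul, Matrix.mul_one,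
      Matrix.one_mul, Matrix.mul_assoc]
    abel

end Matrix

namespace IsMP

variable {m n k l : Type*} [Fintype m] [Fintype n] [Fintype k] [Fintype l]

theorem mul_eq_zero_of_eq_one_sub_mul [DecidableEq m] {A : Matrix m k ℍ[ℝ]}
    {Ad : Matrix k m ℍ[ℝ]} {C M : Matrix m l ℍ[ℝ]} {Md : Matrix l m ℍ[ℝ]}
    (hA : IsMP A Ad) (hM : IsMP M Md) (h : M = (1 - A * Ad) * C) : Md * A = 0 := by
  have hMA : Mᴴ * A = 0 := by
    rw [h, conjTranspose_mul, conjTranspose_sub, conjTranspose_one, hA.2.2.1,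
      Matrix.mul_assoc, one_sub_mul_mul_eq_zero hA.1, Matrix.mul_zero]
  calc Md * A = Md * (M * Md)ᴴ * A := by rw [hM.2.2.1, ← Matrix.mul_assoc, hM.2.1]
    _ = Md * Mdᴴ * (Mᴴ * A) := by rw [conjTranspose_mul]; simp only [Matrix.mul_assoc]
    _ = 0 := by rw [hMA, Matrix.mul_zero]

theorem mul_eq_zero_of_eq_mul_one_sub [DecidableEq n] {B : Matrix k n ℍ[ℝ]}
    {Bd : Matrix n k ℍ[ℝ]} {D N : Matrix l n ℍ[ℝ]} {Nd : Matrix n l ℍ[ℝ]}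
    (hB : IsMP B Bd) (hN : IsMP N Nd) (h : N = D * (1 - Bd * B)) : B * Nd = 0 := by
  have hBN : B * Nᴴ = 0 := by
    rw [h, conjTranspose_mul, conjTranspose_sub, conjTranspose_one, hB.2.2.2,
      ← Matrix.mul_assoc, mul_one_sub_mul_eq_zero hB.1, Matrix.zero_mul]
  calc B * Nd = B * ((Nd * N)ᴴ * Nd) := by rw [hN.2.2.2, hN.2.1]
    _ = B * Nᴴ * (Ndᴴ * Nd) := by rw [conjTranspose_mul]; simp only [Matrix.mul_assoc]
    _ = 0 := by rw [hBN, Matrix.zero_mul]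

end IsMP

theorem exists_solution_form_of_mul_mul_add_mul_mul_eq {m n p r l s : Type*}
    [Fintype m] [Fintype n] [Fintype p] [Fintype r] [Fintype l] [Fintype s]
    [DecidableEq m] [DecidableEq n] [DecidableEq p] [DecidableEq r] [DecidableEq l]
    [DecidableEq s]
    {A₀ : Matrix m p ℍ[ℝ]} {B₀ : Matrix r n ℍ[ℝ]} {C₀ : Matrix m l ℍ[ℝ]}
    {D₀ : Matrix s n ℍ[ℝ]} {E₀ : Matrix m n ℍ[ℝ]}
    {A₀d : Matrix p m ℍ[ℝ]} {B₀d : Matrix n r ℍ[ℝ]} {C₀d : Matrix l m ℍ[ℝ]}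
    (D₀d : Matrix n s ℍ[ℝ])
    {M S : Matrix m l ℍ[ℝ]} {N : Matrix s n ℍ[ℝ]} {Md Sd : Matrix l m ℍ[ℝ]}
    {Nd : Matrix n s ℍ[ℝ]} {Z : Matrix p r ℍ[ℝ]} {W : Matrix l s ℍ[ℝ]}
    (hA₀d : IsMP A₀ A₀d) (hB₀d : IsMP B₀ B₀d) (hC₀d : C₀ * C₀d * C₀ = C₀)
    (hM : M = (1 - A₀ * A₀d) * C₀) (hN : N = D₀ * (1 - B₀d * B₀))
    (hMd : IsMP M Md) (hNd : IsMP N Nd) (hS : S = C₀ * (1 - Md * M)) (hSd : IsMP S Sd)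
    (h : A₀ * Z * B₀ + C₀ * W * D₀ = E₀) :
    ∃ (T₄ : Matrix l s ℍ[ℝ]) (T₅ T₆ : Matrix p r ℍ[ℝ])
      (T₇ T₈ : Matrix l s ℍ[ℝ]),
      Z = A₀d * E₀ * B₀d - A₀d * C₀ * Md * E₀ * B₀d
          - A₀d * S * C₀d * E₀ * Nd * D₀ * B₀d
          - A₀d * S * T₄ * (1 - N * Nd) * D₀ * B₀d
          + (1 - A₀d * A₀) * T₅ + T₆ * (1 - B₀ * B₀d) ∧
      W = Md * E₀ * D₀d + Sd * S * C₀d * E₀ * Nd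
          + (1 - Md * M) * (1 - Sd * S) * T₇
          + (1 - Md * M) * T₄ * (1 - N * Nd) + T₈ * (1 - D₀ * D₀d) := by
  have hMdA₀ : Md * A₀ = 0 := hA₀d.mul_eq_zero_of_eq_one_sub_mul hMd hM
  have hB₀Nd : B₀ * Nd = 0 := hB₀d.mul_eq_zero_of_eq_mul_one_sub hNd hN
  have hMSd : M * Sd = 0 := hMd.mul_eq_zero_of_eq_mul_one_sub hSd hS
  have hMdC₀ : Md * C₀ = Md * M := mul_eq_mul_of_eq_one_sub_mul hMdA₀ hM
  have hD₀Nd : D₀ * Nd = N * Nd := mul_eq_mul_of_eq_mul_one_sub hB₀Nd hN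
  have hSC₀ : S * C₀d * C₀ = S := mul_mul_eq_self_of_eq_mul_one_sub hC₀d hM hS
  have hMdE₀ : Md * E₀ = Md * M * W * D₀ := by
    simp only [← h, Matrix.mul_add, ← Matrix.mul_assoc, hMdA₀, hMdC₀, Matrix.zero_mul,
      zero_add]
  have hSE₀Nd : S * C₀d * E₀ * Nd = S * W * N * Nd := by
    have hE₀Nd : E₀ * Nd = C₀ * W * N * Nd := by
      simp only [← h, Matrix.add_mul, Matrix.mul_assoc, hB₀Nd, hD₀Nd, Matrix.mul_zero,
        zero_add]
    rw [Matrix.mul_assoc (S * C₀d), hE₀Nd]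
    simp only [← Matrix.mul_assoc, hSC₀]
  refine ⟨W, Z, A₀d * A₀ * Z, W * N * Nd, Md * M * W, ?_, ?_⟩
  · have hcore : E₀ - C₀ * (Md * E₀) - S * C₀d * E₀ * Nd * D₀
        - S * W * (1 - N * Nd) * D₀ = A₀ * Z * B₀ := by
      rw [hMdE₀, hSE₀Nd, hS, ← h]
      simp only [Matrix.mul_sub, Matrix.sub_mul, Matrix.mul_one, Matrix.mul_assoc]
      abel
    calc Z = A₀d * (A₀ * Z * B₀) * B₀d + (1 - A₀d * A₀) * Z
          + A₀d * A₀ * Z * (1 - B₀ * B₀d) := by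
          simp only [Matrix.mul_sub, Matrix.sub_mul, Matrix.mul_one, Matrix.one_mul,
            Matrix.mul_assoc]
          abel
      _ = _ := by
          rw [← hcore]
          simp only [Matrix.mul_sub, Matrix.sub_mul, Matrix.mul_assoc]
  · have hLMLS : (1 - Md * M) * (1 - Sd * S) = 1 - Md * M - Sd * S := by
      rw [Matrix.mul_sub (1 - Md * M), Matrix.mul_one, Matrix.sub_mul 1, Matrix.one_mul,
        Matrix.mul_assoc Md, ← Matrix.mul_assoc M, hMSd, Matrix.zero_mul, Matrix.mul_zero,
        sub_zero]
    rw [hMdE₀, show Sd * S * C₀d * E₀ * Nd = Sd * (S * C₀d * E₀ * Nd) by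
      simp only [Matrix.mul_assoc], hSE₀Nd, hLMLS]
    simp only [Matrix.mul_sub, Matrix.sub_mul, Matrix.mul_one, Matrix.one_mul,
      Matrix.mul_assoc]
    abel

theorem four_term_solution_form_general {m k o n p r l s : Type*}
    [Fintype m] [Fintype k] [Fintype o] [Fintype n] [Fintype p] [Fintype r]
    [Fintype l] [Fintype s]
    [DecidableEq m] [DecidableEq n] [DecidableEq k] [DecidableEq o]
    [DecidableEq p] [DecidableEq r] [DecidableEq l] [DecidableEq s]
    (A : Matrix m k (Quaternion ℝ)) (B : Matrix o n (Quaternion ℝ))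
    (C : Matrix m p (Quaternion ℝ)) (D : Matrix r n (Quaternion ℝ))
    (F : Matrix m l (Quaternion ℝ)) (G : Matrix s n (Quaternion ℝ))
    (E : Matrix m n (Quaternion ℝ))
    (Ad : Matrix k m (Quaternion ℝ)) (Bd : Matrix n o (Quaternion ℝ))
    (hA : IsMP A Ad) (hB : IsMP B Bd)
    (A₀ : Matrix m p (Quaternion ℝ)) (B₀ : Matrix r n (Quaternion ℝ))
    (C₀ : Matrix m l (Quaternion ℝ)) (D₀ : Matrix s n (Quaternion ℝ))
    (E₀ : Matrix m n (Quaternion ℝ))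
    (hA₀ : A₀ = (1 - A * Ad) * C) (hB₀ : B₀ = D * (1 - Bd * B))
    (hC₀ : C₀ = (1 - A * Ad) * F) (hD₀ : D₀ = G * (1 - Bd * B))
    (hE₀ : E₀ = (1 - A * Ad) * E * (1 - Bd * B))
    (A₀d : Matrix p m (Quaternion ℝ)) (B₀d : Matrix n r (Quaternion ℝ))
    (C₀d : Matrix l m (Quaternion ℝ)) (D₀d : Matrix n s (Quaternion ℝ))
    (hA₀d : IsMP A₀ A₀d) (hB₀d : IsMP B₀ B₀d)
    (hC₀d : IsMP C₀ C₀d)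
    (M : Matrix m l (Quaternion ℝ)) (N : Matrix s n (Quaternion ℝ))
    (hM : M = (1 - A₀ * A₀d) * C₀) (hN : N = D₀ * (1 - B₀d * B₀))
    (Md : Matrix l m (Quaternion ℝ)) (Nd : Matrix n s (Quaternion ℝ))
    (hMd : IsMP M Md) (hNd : IsMP N Nd)
    (S : Matrix m l (Quaternion ℝ)) (hS : S = C₀ * (1 - Md * M))
    (Sd : Matrix l m (Quaternion ℝ)) (hSd : IsMP S Sd)
    (X : Matrix k n (Quaternion ℝ)) (Y : Matrix m o (Quaternion ℝ))
    (Z : Matrix p r (Quaternion ℝ)) (W : Matrix l s (Quaternion ℝ))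
    (hsol : A * X + Y * B + C * Z * D + F * W * G = E) :
    ∃ (T₁ : Matrix k o (Quaternion ℝ)) (T₂ : Matrix k n (Quaternion ℝ))
      (T₃ : Matrix m o (Quaternion ℝ)) (T₄ : Matrix l s (Quaternion ℝ))
      (T₅ T₆ : Matrix p r (Quaternion ℝ)) (T₇ T₈ : Matrix l s (Quaternion ℝ)),
      Z = A₀d * E₀ * B₀d - A₀d * C₀ * Md * E₀ * B₀d
          - A₀d * S * C₀d * E₀ * Nd * D₀ * B₀d
          - A₀d * S * T₄ * (1 - N * Nd) * D₀ * B₀d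
          + (1 - A₀d * A₀) * T₅ + T₆ * (1 - B₀ * B₀d) ∧
      W = Md * E₀ * D₀d + Sd * S * C₀d * E₀ * Nd
          + (1 - Md * M) * (1 - Sd * S) * T₇
          + (1 - Md * M) * T₄ * (1 - N * Nd) + T₈ * (1 - D₀ * D₀d) ∧
      X = Ad * (E - C * Z * D - F * W * G) - T₁ * B + (1 - Ad * A) * T₂ ∧
      Y = (1 - A * Ad) * (E - C * Z * D - F * W * G) * Bd + A * T₁ + T₃ * (1 - B * Bd) := by
  have hreduced : A₀ * Z * B₀ + C₀ * W * D₀ = E₀ := by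
    subst hA₀ hB₀ hC₀ hD₀ hE₀
    exact two_term_eq_of_four_term_eq hA.1 hB.1 hsol
  obtain ⟨T₄, T₅, T₆, T₇, T₈, hZ, hW⟩ :=
    exists_solution_form_of_mul_mul_add_mul_mul_eq D₀d hA₀d hB₀d hC₀d.1 hM hN hMd hNd hS hSd
      hreduced
  obtain ⟨T₁, T₂, T₃, hX, hY⟩ := exists_solution_form_of_mul_add_mul_eq (Bd := Bd) hA.1
    (show A * X + Y * B = E - C * Z * D - F * W * G by rw [← hsol]; abel)
  exact ⟨T₁, T₂, T₃, T₄, T₅, T₆, T₇, T₈, hZ, hW, hX, hY⟩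

/-- Every solution `(X, Y, Z, W)` of `A X + Y B + C Z D + F W G = E` has the displayed
parametric form for some `T₁, …, T₈`. -/
theorem four_term_solution_form {m k o n p r l s : Type*}
    [Fintype m] [Fintype k] [Fintype o] [Fintype n] [Fintype p] [Fintype r]
    [Fintype l] [Fintype s]
    [DecidableEq m] [DecidableEq n] [DecidableEq k] [DecidableEq o]
    [DecidableEq p] [DecidableEq r] [DecidableEq l] [DecidableEq s]
    (A : Matrix m k (Quaternion ℝ)) (B : Matrix o n (Quaternion ℝ))
    (C : Matrix m p (Quaternion ℝ)) (D : Matrix r n (Quaternion ℝ))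
    (F : Matrix m l (Quaternion ℝ)) (G : Matrix s n (Quaternion ℝ))
    (E : Matrix m n (Quaternion ℝ))
    (Ad : Matrix k m (Quaternion ℝ)) (Bd : Matrix n o (Quaternion ℝ))
    (hA : IsMP A Ad) (hB : IsMP B Bd)
    (A₀ : Matrix m p (Quaternion ℝ)) (B₀ : Matrix r n (Quaternion ℝ))
    (C₀ : Matrix m l (Quaternion ℝ)) (D₀ : Matrix s n (Quaternion ℝ))
    (E₀ : Matrix m n (Quaternion ℝ))
    (hA₀ : A₀ = (1 - A * Ad) * C) (hB₀ : B₀ = D * (1 - Bd * B))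
    (hC₀ : C₀ = (1 - A * Ad) * F) (hD₀ : D₀ = G * (1 - Bd * B))
    (hE₀ : E₀ = (1 - A * Ad) * E * (1 - Bd * B))
    (A₀d : Matrix p m (Quaternion ℝ)) (B₀d : Matrix n r (Quaternion ℝ))
    (C₀d : Matrix l m (Quaternion ℝ)) (D₀d : Matrix n s (Quaternion ℝ))
    (hA₀d : IsMP A₀ A₀d) (hB₀d : IsMP B₀ B₀d)
    (hC₀d : IsMP C₀ C₀d) (hD₀d : IsMP D₀ D₀d)
    (M : Matrix m l (Quaternion ℝ)) (N : Matrix s n (Quaternion ℝ))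
    (hM : M = (1 - A₀ * A₀d) * C₀) (hN : N = D₀ * (1 - B₀d * B₀))
    (Md : Matrix l m (Quaternion ℝ)) (Nd : Matrix n s (Quaternion ℝ))
    (hMd : IsMP M Md) (hNd : IsMP N Nd)
    (S : Matrix m l (Quaternion ℝ)) (hS : S = C₀ * (1 - Md * M))
    (Sd : Matrix l m (Quaternion ℝ)) (hSd : IsMP S Sd)
    (X : Matrix k n (Quaternion ℝ)) (Y : Matrix m o (Quaternion ℝ))
    (Z : Matrix p r (Quaternion ℝ)) (W : Matrix l s (Quaternion ℝ))
    (hsol : A * X + Y * B + C * Z * D + F * W * G = E) :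
    ∃ (T₁ : Matrix k o (Quaternion ℝ)) (T₂ : Matrix k n (Quaternion ℝ))
      (T₃ : Matrix m o (Quaternion ℝ)) (T₄ : Matrix l s (Quaternion ℝ))
      (T₅ T₆ : Matrix p r (Quaternion ℝ)) (T₇ T₈ : Matrix l s (Quaternion ℝ)),
      Z = A₀d * E₀ * B₀d - A₀d * C₀ * Md * E₀ * B₀d
          - A₀d * S * C₀d * E₀ * Nd * D₀ * B₀d
          - A₀d * S * T₄ * (1 - N * Nd) * D₀ * B₀d
          + (1 - A₀d * A₀) * T₅ + T₆ * (1 - B₀ * B₀d) ∧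
      W = Md * E₀ * D₀d + Sd * S * C₀d * E₀ * Nd
          + (1 - Md * M) * (1 - Sd * S) * T₇
          + (1 - Md * M) * T₄ * (1 - N * Nd) + T₈ * (1 - D₀ * D₀d) ∧
      X = Ad * (E - C * Z * D - F * W * G) - T₁ * B + (1 - Ad * A) * T₂ ∧
      Y = (1 - A * Ad) * (E - C * Z * D - F * W * G) * Bd + A * T₁ + T₃ * (1 - B * Bd) :=
  four_term_solution_form_general A B C D F G E Ad Bd hA hB A₀ B₀ C₀ D₀ E₀ hA₀ hB₀ hC₀ hD₀ hE₀ A₀d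
    B₀d C₀d D₀d hA₀d hB₀d hC₀d M N hM hN Md Nd hMd hNd S hS Sd hSd X Y Z W hsol
end
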